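/- arXiv:1209.4958 — 2 statements merged into one kernel-verified Lean document; each statement's English description precedes it below -/
import Mathlib

section
/- For every lattice cone σ = σ(v₁,v₂) with primitive generators v₁, v₂ ∈ ℤ², one has the identity of formal power series L_σ(x₁,x₂) = Todd_σ^{even}(x₁,x₂) − (|Γ_σ|/4)·x₁x₂ in ℂ[[x₁,x₂]], where Todd_σ^{even}(x₁,x₂) := (Todd_σ(x₁,x₂) + Todd_σ(−x₁,−x₂))/2 is the even part of Todd_σ under (x₁,x₂) ↦ (−x₁,−x₂), and |Γ_σ| is the order of the finite group Γ_σ. -/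
noncomputable section

/-- The twisted Todd series `Todd^λ(S) = S/(1 − λ·e^{−S}) ∈ ℂ[[S]]`.
For `λ = 1` it is the inverse of the power series `(1 − e^{−S})/S` (constant term 1);
for `λ ≠ 1` the series `1 − λe^{−S}` is invertible (constant term `1 − λ`). -/
def ToddPS (l : ℂ) : PowerSeries ℂ :=
  if l = 1 then (PowerSeries.mk fun n => ((-1) ^ n / (n + 1).factorial : ℂ))⁻¹
  else PowerSeries.X * (1 - l • PowerSeries.mk fun n => ((-1) ^ n / n.factorial : ℂ))⁻¹

/-- `L^λ(S) := Todd^λ(S) − S/2`. -/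
def LPS (l : ℂ) : PowerSeries ℂ := ToddPS l - PowerSeries.C (1 / 2 : ℂ) * PowerSeries.X

/-- Substitution of the linear form `c·x₁ + d·x₂` into a univariate power series:
the coefficient of `x₁^{e₀}x₂^{e₁}` of `f(c·x₁ + d·x₂)` is
`coeff_{e₀+e₁}(f)·binom(e₀+e₁,e₀)·c^{e₀}d^{e₁}`. -/
def substLin (c d : ℂ) (f : PowerSeries ℂ) : MvPowerSeries (Fin 2) ℂ :=
  fun e => (PowerSeries.coeff (e 0 + e 1) f) * ((e 0 + e 1).choose (e 0) : ℂ) *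
    c ^ (e 0) * d ^ (e 1)

/-- For a lift `m` of `g ∈ Γ_σ = ℤ²/(ℤw₁+ℤw₂)`, writing `m = a₁w₁ + a₂w₂` with
`a₁, a₂ ∈ ℚ` (Cramer's rule), `χ_{σ,1}(g) = e^{2πi·a₁}`. -/
def char1 (w₁ w₂ m : ℤ × ℤ) : ℂ :=
  Complex.exp (2 * Real.pi * Complex.I *
    (((m.1 * w₂.2 - m.2 * w₂.1 : ℤ) : ℂ) / ((w₁.1 * w₂.2 - w₁.2 * w₂.1 : ℤ) : ℂ)))

/-- As `char1`, for the second coordinate: `χ_{σ,2}(g) = e^{2πi·a₂}`. -/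
def char2 (w₁ w₂ m : ℤ × ℤ) : ℂ :=
  Complex.exp (2 * Real.pi * Complex.I *
    (((w₁.1 * m.2 - w₁.2 * m.1 : ℤ) : ℂ) / ((w₁.1 * w₂.2 - w₁.2 * w₂.1 : ℤ) : ℂ)))

/-- The Todd series of the lattice cone `σ(w₁,w₂)`:
`Todd_σ(x₁,x₂) := Σ_{g∈Γ_σ} Todd^{χ_{σ,1}(g)}(x₁)·Todd^{χ_{σ,2}(g)}(x₂)`. -/
def ToddCone (w₁ w₂ : ℤ × ℤ) : MvPowerSeries (Fin 2) ℂ :=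
  ∑ᶠ g : (ℤ × ℤ) ⧸ Submodule.span ℤ {w₁, w₂},
    substLin 1 0 (ToddPS (char1 w₁ w₂ g.out)) * substLin 0 1 (ToddPS (char2 w₁ w₂ g.out))

/-- `L_σ(x₁,x₂) := Σ_{g∈Γ_σ} L^{χ_{σ,1}(g)}(x₁)·L^{χ_{σ,2}(g)}(x₂)`. -/
def LCone (w₁ w₂ : ℤ × ℤ) : MvPowerSeries (Fin 2) ℂ :=
  ∑ᶠ g : (ℤ × ℤ) ⧸ Submodule.span ℤ {w₁, w₂},
    substLin 1 0 (LPS (char1 w₁ w₂ g.out)) * substLin 0 1 (LPS (char2 w₁ w₂ g.out))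

/-- A lattice vector is primitive if it is not an integer multiple `≥ 2`
of another lattice vector. -/
def IsPrimitiveVec (v : ℤ × ℤ) : Prop := ∀ (n : ℕ) (w : ℤ × ℤ), v = (n : ℤ) • w → n = 1

/-- The image of `T(x₁,x₂)` under `(x₁,x₂) ↦ (−x₁,−x₂)`. -/
def negSub (T : MvPowerSeries (Fin 2) ℂ) : MvPowerSeries (Fin 2) ℂ :=
  fun e => ((-1 : ℂ)) ^ (e 0 + e 1) * T e

/-!
Both characters satisfy `χ(−g) = χ(g)⁻¹`, and `Todd^{λ⁻¹}(−S) = Todd^λ(S) − S`; the latter holds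
because both sides solve `f·(1 − λe^{−S}) = S`, an equation with a unique solution in the domain
`ℂ⟦S⟧`. So, writing `Tᵢ = Todd^{χ_{σ,i}(g)}(xᵢ)`, the `g`-summand of `L_σ` is
`(T₁ − x₁/2)(T₂ − x₂/2) = ½T₁T₂ + ½(T₁ − x₁)(T₂ − x₂) − ¼x₁x₂`, whose middle term is the
`(−g)`-summand of `Todd_σ(−x₁,−x₂)`. Summing over the finite group `Γ_σ` gives the identity.
-/

namespace PowerSeries

theorem rescale_C {R : Type*} [CommSemiring R] (a c : R) : rescale a (C c) = C c := by
  ext n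
  rw [coeff_rescale, coeff_C]
  split_ifs with h <;> simp [h]

theorem constantCoeff_rescale_exp {A : Type*} [CommRing A] [Algebra ℚ A] (a : A) :
    constantCoeff (rescale a (exp A)) = 1 := by
  simp [← coeff_zero_eq_constantCoeff_apply, coeff_rescale]

theorem exp_mul_rescale_neg_one_exp {A : Type*} [CommRing A] [Algebra ℚ A] :
    exp A * rescale (-1) (exp A) = 1 :=
  exp_mul_exp_neg_eq_one

theorem mk_neg_one_pow_div_factorial {K : Type*} [Field K] [CharZero K] :
    (mk fun n => ((-1) ^ n / n.factorial : K)) = rescale (-1) (exp K) := by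
  ext n
  rw [coeff_rescale, coeff_exp, coeff_mk]
  push_cast
  ring

theorem X_mul_mk_neg_one_pow_div_succ_factorial {K : Type*} [Field K] [CharZero K] :
    X * mk (fun n => ((-1) ^ n / (n + 1).factorial : K)) = 1 - rescale (-1) (exp K) := by
  ext n
  rw [← mk_neg_one_pow_div_factorial]
  cases n with
  | zero => simp
  | succ n =>
    rw [coeff_succ_X_mul, map_sub, coeff_mk, coeff_mk]
    simp [Nat.factorial_succ, pow_succ]
    ring

end PowerSeries

namespace ToddPS

open PowerSeries

theorem mul_one_sub_eq_X (l : ℂ) : ToddPS l * (1 - C l * rescale (-1) (exp ℂ)) = X := by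
  rw [ToddPS, smul_eq_C_mul, mk_neg_one_pow_div_factorial]
  split_ifs with hl
  · rw [hl, map_one, one_mul, ← X_mul_mk_neg_one_pow_div_succ_factorial, mul_left_comm,
      PowerSeries.inv_mul_cancel _ (by simp), mul_one]
  · have hu : constantCoeff (1 - C l * rescale (-1) (exp ℂ)) ≠ 0 := by
      simpa [constantCoeff_rescale_exp, sub_eq_zero] using Ne.symm hl
    rw [mul_assoc, PowerSeries.inv_mul_cancel _ hu, mul_one]

theorem eq_of_mul_one_sub_eq_X {l : ℂ} {f : PowerSeries ℂ}
    (hf : f * (1 - C l * rescale (-1) (exp ℂ)) = X) : f = ToddPS l := by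
  refine mul_right_cancel₀ (fun h0 => X_ne_zero (R := ℂ) ?_) (hf.trans (mul_one_sub_eq_X l).symm)
  rw [← mul_one_sub_eq_X l, h0, mul_zero]

theorem rescale_neg_one_inv {l : ℂ} (hl : l ≠ 0) :
    rescale (-1) (ToddPS l⁻¹) = ToddPS l - X := by
  have h := congrArg (rescale (-1 : ℂ)) (mul_one_sub_eq_X l⁻¹)
  simp only [map_mul, map_sub, map_one, rescale_neg_one_X, rescale_rescale, rescale_C,
    neg_mul_neg, one_mul, rescale_one, RingHom.id_apply] at h
  have hC : C l * C l⁻¹ = 1 := by rw [← map_mul, mul_inv_cancel₀ hl, map_one]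
  refine eq_sub_of_add_eq (eq_of_mul_one_sub_eq_X ?_)
  -- `1 − λe^{−S} = −λe^{−S}·(1 − λ⁻¹e^{S})`
  linear_combination (-C l * rescale (-1) (exp ℂ)) * h - rescale (-1) (ToddPS l⁻¹) * hC
    - C l * C l⁻¹ * rescale (-1) (ToddPS l⁻¹) * exp_mul_rescale_neg_one_exp (A := ℂ)

end ToddPS

open PowerSeries in
theorem coeff_LPS_mul_coeff_LPS {l₁ l₂ : ℂ} (hl₁ : l₁ ≠ 0) (hl₂ : l₂ ≠ 0) (i j : ℕ) :
    coeff i (LPS l₁) * coeff j (LPS l₂) =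
      1 / 2 * (coeff i (ToddPS l₁) * coeff j (ToddPS l₂))
      + 1 / 2 * ((-1) ^ (i + j) * (coeff i (ToddPS l₁⁻¹) * coeff j (ToddPS l₂⁻¹)))
      - 1 / 4 * (coeff i X * coeff j X) := by
  have h₁ := congrArg (coeff i) (ToddPS.rescale_neg_one_inv hl₁)
  have h₂ := congrArg (coeff j) (ToddPS.rescale_neg_one_inv hl₂)
  rw [coeff_rescale, map_sub] at h₁ h₂
  rw [pow_add, mul_mul_mul_comm, h₁, h₂, LPS, LPS, map_sub, map_sub, coeff_C_mul, coeff_C_mul]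
  ring

section

open MvPowerSeries

theorem coeff_substLin_one_zero (f : PowerSeries ℂ) (p : Fin 2 →₀ ℕ) :
    coeff p (substLin 1 0 f) = if p 1 = 0 then PowerSeries.coeff (p 0) f else 0 := by
  change substLin 1 0 f p = _
  split_ifs with h <;> simp [substLin, h]

theorem coeff_substLin_zero_one (f : PowerSeries ℂ) (p : Fin 2 →₀ ℕ) :
    coeff p (substLin 0 1 f) = if p 0 = 0 then PowerSeries.coeff (p 1) f else 0 := by
  change substLin 0 1 f p = _
  split_ifs with h <;> simp [substLin, h]

theorem coeff_substLin_mul_substLin (f g : PowerSeries ℂ) (e : Fin 2 →₀ ℕ) :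
    coeff e (substLin 1 0 f * substLin 0 1 g) =
      PowerSeries.coeff (e 0) f * PowerSeries.coeff (e 1) g := by
  rw [coeff_mul, Finset.sum_eq_single (Finsupp.single 0 (e 0), Finsupp.single 1 (e 1))]
  · simp [coeff_substLin_one_zero, coeff_substLin_zero_one]
  · rintro ⟨p, q⟩ hpq hne
    rw [Finset.HasAntidiagonal.mem_antidiagonal] at hpq
    rw [coeff_substLin_one_zero, coeff_substLin_zero_one]
    split_ifs with hp hq <;> try simp
    refine absurd ?_ hne
    ext i <;> fin_cases i <;> simp [← hpq, hp, hq]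
  · intro h
    refine absurd ?_ h
    rw [Finset.HasAntidiagonal.mem_antidiagonal]
    ext i; fin_cases i <;> simp

theorem coeff_X_zero_mul_X_one (e : Fin 2 →₀ ℕ) :
    coeff e (X 0 * X 1 : MvPowerSeries (Fin 2) ℂ) =
      PowerSeries.coeff (e 0) PowerSeries.X * PowerSeries.coeff (e 1) PowerSeries.X := by
  simp [X, monomial_mul_monomial, coeff_monomial, PowerSeries.coeff_X, Finsupp.ext_iff,
    Fin.forall_fin_two, ← ite_and, and_comm]

theorem coeff_negSub (T : MvPowerSeries (Fin 2) ℂ) (e : Fin 2 →₀ ℕ) :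
    coeff e (negSub T) = (-1) ^ (e 0 + e 1) * coeff e T :=
  rfl

theorem sum_substLin_LPS_mul_substLin_LPS {G : Type*} [AddGroup G] [Fintype G] {c₁ c₂ : G → ℂ}
    (hc₁ : ∀ g, c₁ g ≠ 0) (hc₂ : ∀ g, c₂ g ≠ 0)
    (hneg₁ : ∀ g, c₁ (-g) = (c₁ g)⁻¹) (hneg₂ : ∀ g, c₂ (-g) = (c₂ g)⁻¹) :
    ∑ g, substLin 1 0 (LPS (c₁ g)) * substLin 0 1 (LPS (c₂ g)) =
      C (1 / 2 : ℂ) * (∑ g, substLin 1 0 (ToddPS (c₁ g)) * substLin 0 1 (ToddPS (c₂ g))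
        + negSub (∑ g, substLin 1 0 (ToddPS (c₁ g)) * substLin 0 1 (ToddPS (c₂ g))))
      - C ((Nat.card G : ℂ) / 4) * X 0 * X 1 := by
  ext e
  simp only [map_sub, map_add, map_sum, mul_assoc, coeff_C_mul, coeff_negSub,
    coeff_substLin_mul_substLin, coeff_X_zero_mul_X_one,
    coeff_LPS_mul_coeff_LPS (hc₁ _) (hc₂ _), ← hneg₁, ← hneg₂]
  have hreindex := Equiv.sum_comp (Equiv.neg G) fun g =>
    PowerSeries.coeff (e 0) (ToddPS (c₁ g)) * PowerSeries.coeff (e 1) (ToddPS (c₂ g))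
  simp only [Equiv.neg_apply] at hreindex
  rw [Finset.sum_sub_distrib, Finset.sum_add_distrib, ← Finset.mul_sum, ← Finset.mul_sum,
    ← Finset.mul_sum, hreindex, Finset.sum_const, Finset.card_univ, nsmul_eq_mul,
    Nat.card_eq_fintype_card]
  ring

end

theorem Submodule.Quotient.apply_out_neg {R M α : Type*} [Ring R] [AddCommGroup M] [Module R M]
    [Inv α] {p : Submodule R M} {c : M → α} (hc : ∀ m m', m - m' ∈ p → c m = c m')
    (hneg : ∀ m, c (-m) = (c m)⁻¹) (g : M ⧸ p) : c (-g).out = (c g.out)⁻¹ := by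
  rw [← hneg]
  refine hc _ _ ((Submodule.Quotient.eq p).mp ?_)
  rw [Submodule.Quotient.mk_neg, Submodule.Quotient.mk_out, Submodule.Quotient.mk_out]

theorem finite_quotient_span_pair {w₁ w₂ : ℤ × ℤ} (hD : w₁.1 * w₂.2 - w₁.2 * w₂.1 ≠ 0) :
    Finite ((ℤ × ℤ) ⧸ Submodule.span ℤ {w₁, w₂}) := by
  refine Module.finite_of_fg_torsion _ fun g => ⟨⟨_, mem_nonZeroDivisors_of_ne_zero hD⟩, ?_⟩
  induction g using Submodule.Quotient.induction_on with | _ x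
  rw [Submonoid.mk_smul, ← Submodule.Quotient.mk_smul, Submodule.Quotient.mk_eq_zero,
    Submodule.mem_span_pair]
  exact ⟨x.1 * w₂.2 - x.2 * w₂.1, w₁.1 * x.2 - w₁.2 * x.1, by ext <;> simp <;> ring⟩

theorem char1_ne_zero (w₁ w₂ m : ℤ × ℤ) : char1 w₁ w₂ m ≠ 0 :=
  Complex.exp_ne_zero _

theorem char1_neg (w₁ w₂ m : ℤ × ℤ) : char1 w₁ w₂ (-m) = (char1 w₁ w₂ m)⁻¹ := by
  rw [char1, char1, ← Complex.exp_neg, Prod.fst_neg, Prod.snd_neg]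
  push_cast
  ring_nf

theorem char1_eq_of_sub_mem {w₁ w₂ m m' : ℤ × ℤ} (hD : w₁.1 * w₂.2 - w₁.2 * w₂.1 ≠ 0)
    (h : m - m' ∈ Submodule.span ℤ {w₁, w₂}) : char1 w₁ w₂ m = char1 w₁ w₂ m' := by
  obtain ⟨a, b, hab⟩ := Submodule.mem_span_pair.mp h
  have hD' : ((w₁.1 * w₂.2 - w₁.2 * w₂.1 : ℤ) : ℂ) ≠ 0 := by exact_mod_cast hD
  refine Complex.exp_eq_exp_iff_exists_int.mpr ⟨a, ?_⟩
  have h1 := congrArg Prod.fst hab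
  have h2 := congrArg Prod.snd hab
  simp only [Prod.fst_add, Prod.snd_add, Prod.smul_fst, Prod.smul_snd, smul_eq_mul,
    Prod.fst_sub, Prod.snd_sub] at h1 h2
  have hnum : m.1 * w₂.2 - m.2 * w₂.1 =
      m'.1 * w₂.2 - m'.2 * w₂.1 + (w₁.1 * w₂.2 - w₁.2 * w₂.1) * a := by
    linear_combination (-w₂.2) * h1 + w₂.1 * h2
  field_simp
  exact_mod_cast hnum

theorem char2_eq_char1 (w₁ w₂ m : ℤ × ℤ) : char2 w₁ w₂ m = char1 w₂ w₁ m := by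
  rw [char1, char2, ← neg_div_neg_eq]
  push_cast
  ring_nf

theorem char2_ne_zero (w₁ w₂ m : ℤ × ℤ) : char2 w₁ w₂ m ≠ 0 :=
  Complex.exp_ne_zero _

theorem char2_neg (w₁ w₂ m : ℤ × ℤ) : char2 w₁ w₂ (-m) = (char2 w₁ w₂ m)⁻¹ := by
  simp only [char2_eq_char1, char1_neg]

theorem char2_eq_of_sub_mem {w₁ w₂ m m' : ℤ × ℤ} (hD : w₁.1 * w₂.2 - w₁.2 * w₂.1 ≠ 0)
    (h : m - m' ∈ Submodule.span ℤ {w₁, w₂}) : char2 w₁ w₂ m = char2 w₁ w₂ m' := by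
  rw [Set.pair_comm] at h
  simp only [char2_eq_char1]
  exact char1_eq_of_sub_mem (by contrapose! hD; linarith) h

theorem stmt_3_general (v₁ v₂ : ℤ × ℤ) (hindep : v₁.1 * v₂.2 - v₁.2 * v₂.1 ≠ 0) :
    LCone v₁ v₂ =
      MvPowerSeries.C (1 / 2 : ℂ) * (ToddCone v₁ v₂ + negSub (ToddCone v₁ v₂))
      - MvPowerSeries.C
          ((Nat.card ((ℤ × ℤ) ⧸ Submodule.span ℤ {v₁, v₂}) : ℂ) / 4) *
        MvPowerSeries.X 0 * MvPowerSeries.X 1 := by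
  have := finite_quotient_span_pair hindep
  let _ := Fintype.ofFinite ((ℤ × ℤ) ⧸ Submodule.span ℤ {v₁, v₂})
  rw [LCone, ToddCone, finsum_eq_sum_of_fintype, finsum_eq_sum_of_fintype]
  exact sum_substLin_LPS_mul_substLin_LPS (fun _ => char1_ne_zero _ _ _)
    (fun _ => char2_ne_zero _ _ _)
    (Submodule.Quotient.apply_out_neg (fun _ _ => char1_eq_of_sub_mem hindep) (char1_neg _ _))
    (Submodule.Quotient.apply_out_neg (fun _ _ => char2_eq_of_sub_mem hindep) (char2_neg _ _))

theorem stmt_3 (v₁ v₂ : ℤ × ℤ) (hprim₁ : IsPrimitiveVec v₁) (hprim₂ : IsPrimitiveVec v₂)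
    (hindep : v₁.1 * v₂.2 - v₁.2 * v₂.1 ≠ 0) :
    LCone v₁ v₂ =
      MvPowerSeries.C (1 / 2 : ℂ) * (ToddCone v₁ v₂ + negSub (ToddCone v₁ v₂))
      - MvPowerSeries.C
          ((Nat.card ((ℤ × ℤ) ⧸ Submodule.span ℤ {v₁, v₂}) : ℂ) / 4) *
        MvPowerSeries.X 0 * MvPowerSeries.X 1 :=
  stmt_3_general v₁ v₂ hindep

end
end

section
/- For every integer k ≥ 0, every real number A > 0 and all real numbers a, b: Σ_{i=0}^{2k} binom(2k+1, i+1)·(a^{i+1} + b^{i+1})·[∂_{h₂}ⁱ∂_{h₁}^{2k−i} e^{−A(h₂² − (a+b)h₁h₂ + h₁²)}]|_{(h₁,h₂)=(0,0)} + 2·∫₀^∞ [∂_{x₁}^{2k+1} e^{−A(x₂² + (a+b)x₁x₂ + x₁²)}]|_{x₁=0} dx₂ = 0. -/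
/-!
Let `f = exp q` with `q(x, y) = -A (y² - (a+b) x y + x²)`. Every partial derivative of `f` is
`p · f` with `p` a polynomial, and on these polynomials `∂ᵢ` acts as the twisted derivation
`p ↦ ∂ᵢ p + p ∂ᵢ q`. These commute, so the binomial theorem applies: for `n = 2k + 1` and
`N = ∑ᵢ C(n, i+1) (a^(i+1) + b^(i+1)) ∂₂ⁱ ∂₁^(n-1-i)`,
`∂₂ N = (∂₁ + a ∂₂)ⁿ + (∂₁ + b ∂₂)ⁿ - 2 ∂₁ⁿ`.
At `(0, y)` the two directional terms applied to `f` are the `n`-th derivatives at `s = 0` of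
`s ↦ f(s, y + a s)` and `s ↦ f(s, y + b s)`. The map `(x, y) ↦ (-x, y - (a+b) x)` preserves `q`
and turns the second function into the first one composed with `s ↦ -s`, so for odd `n` they
cancel. As the integrand is `∂₁ⁿ` of `f(-x, y)`, it equals `-∂₁ⁿ f (0, y) = ½ ∂₂ (N f) (0, y)`;
`N f (0, y)` is a polynomial times `exp (-A y²)`, so twice the integral is `-(N f)(0, 0)`, while
the sum is `(N f)(0, 0)`.
-/

noncomputable section

/-- first-coordinate partial derivative of a function on `ℝ × ℝ`. -/
def pd1 (f : ℝ × ℝ → ℝ) : ℝ × ℝ → ℝ := fun p => deriv (fun x => f (x, p.2)) p.1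

/-- second-coordinate partial derivative of a function on `ℝ × ℝ`. -/
def pd2 (f : ℝ × ℝ → ℝ) : ℝ × ℝ → ℝ := fun p => deriv (fun y => f (p.1, y)) p.2

open Finset MeasureTheory Set Real

theorem Commute.add_smul_pow_sub_pow {R S : Type*} [CommSemiring R] [Ring S] [Algebra R S]
    {x y : S} (h : Commute x y) (a : R) (n : ℕ) :
    (x + a • y) ^ n - x ^ n =
      y * ∑ i ∈ range n, (n.choose (i + 1) * a ^ (i + 1) : R) • (y ^ i * x ^ (n - 1 - i)) := by
  rw [add_comm, (h.symm.smul_left a).add_pow, sum_range_succ', mul_sum]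
  simp only [pow_zero, one_mul, Nat.sub_zero, Nat.choose_zero_right, Nat.cast_one, mul_one,
    add_sub_cancel_right]
  refine sum_congr rfl fun i _ => ?_
  rw [smul_pow, smul_mul_assoc, smul_mul_assoc, ← Nat.cast_comm, ← nsmul_eq_mul,
    ← Nat.cast_smul_eq_nsmul R, smul_smul, mul_smul_comm, ← mul_assoc, ← pow_succ', mul_comm,
    Nat.sub_sub, add_comm 1 i]

theorem integrable_polynomial_eval_mul_exp_neg_mul_sq {A : ℝ} (hA : 0 < A) (r : Polynomial ℝ) :
    Integrable fun t => r.eval t * exp (-A * t ^ 2) := by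
  induction r using Polynomial.induction_on' with
  | add r s hr hs => simpa [add_mul] using hr.fun_add hs
  | monomial n c =>
    have hn : (-1 : ℝ) < n := by linarith [n.cast_nonneg (α := ℝ)]
    simpa [mul_assoc, rpow_natCast] using
      (integrable_rpow_mul_exp_neg_mul_sq hA hn).const_mul c

namespace MvPolynomial

variable {σ : Type*}

theorem pderiv_comm {R : Type*} [CommRing R] (i j : σ) (p : MvPolynomial σ R) :
    pderiv i (pderiv j p) = pderiv j (pderiv i p) := by
  classical
  -- the commutator is a derivation that kills every variable
  have h : ⁅pderiv i, pderiv j⁆ = (0 : Derivation R (MvPolynomial σ R) (MvPolynomial σ R)) :=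
    derivation_ext fun k => by
      rw [Derivation.commutator_apply]
      simp [pderiv_X, Pi.single_apply, apply_ite]
  have := congr($h p)
  rwa [Derivation.commutator_apply, Derivation.zero_apply, sub_eq_zero] at this

theorem hasDerivAt_eval_add_smul [Fintype σ] (p : MvPolynomial σ ℝ) (x u : σ → ℝ) (t : ℝ) :
    HasDerivAt (fun s => eval (x + s • u) p) (∑ i, u i * eval (x + t • u) (pderiv i p)) t := by
  classical
  induction p using MvPolynomial.induction_on with
  | C c => simpa using hasDerivAt_const t c
  | add p q hp hq => simpa [mul_add, sum_add_distrib] using hp.fun_add hq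
  | mul_X p j hp =>
    have hXj : HasDerivAt (fun s => x j + s * u j) (u j) t := by
      simpa using ((hasDerivAt_id t).mul_const (u j)).const_add (x j)
    simp only [eval_mul, eval_X, Pi.add_apply, Pi.smul_apply, smul_eq_mul]
    refine (hp.fun_mul hXj).congr_deriv ?_
    simp only [mul_add, sum_mul, Derivation.leibniz, pderiv_X, Pi.single_apply, smul_eq_mul,
      mul_ite, mul_one, mul_zero, map_add, apply_ite (eval _), map_zero, map_mul, eval_X,
      Pi.add_apply, Pi.smul_apply, sum_add_distrib, sum_ite_eq, Finset.mem_univ, if_true]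
    simp_rw [← sum_mul, mul_left_comm (u _) (x j + t * u j), ← mul_sum]
    ring

theorem eval_add_smul_eq_eval_aeval (p : MvPolynomial σ ℝ) (x u : σ → ℝ) (t : ℝ) :
    eval (x + t • u) p =
      (aeval (fun i => Polynomial.C (x i) + Polynomial.C (u i) * Polynomial.X) p).eval t := by
  rw [← Polynomial.coe_aeval_eq_eval, ← AlgHom.comp_apply, comp_aeval, ← coe_aeval_eq_eval]
  have h : x + t • u = fun i =>
      Polynomial.aeval t (Polynomial.C (x i) + Polynomial.C (u i) * Polynomial.X) := by
    funext i
    simp only [Pi.add_apply, Pi.smul_apply, smul_eq_mul, map_add, map_mul, Polynomial.aeval_C,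
      Polynomial.aeval_X, Algebra.algebraMap_self, RingHom.id_apply, mul_comm]
  rw [h]
  rfl

variable (q : MvPolynomial σ ℝ)

def polyMulExp : MvPolynomial σ ℝ →ₗ[ℝ] (σ → ℝ) → ℝ where
  toFun p x := eval x p * exp (eval x q)
  map_add' p p' := by
    funext x
    simp [add_mul]
  map_smul' c p := by
    funext x
    simp [smul_eq_C_mul, mul_assoc]

theorem polyMulExp_apply (p : MvPolynomial σ ℝ) (x : σ → ℝ) :
    polyMulExp q p x = eval x p * exp (eval x q) :=
  rfl

def twistedPDeriv (i : σ) : Module.End ℝ (MvPolynomial σ ℝ) :=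
  (pderiv i).toLinearMap + LinearMap.mulLeft ℝ (pderiv i q)

theorem commute_twistedPDeriv (i j : σ) : Commute (twistedPDeriv q i) (twistedPDeriv q j) := by
  refine LinearMap.ext fun p => ?_
  simp only [Module.End.mul_apply, twistedPDeriv, LinearMap.add_apply, LinearMap.mulLeft_apply,
    Derivation.coeFn_coe, map_add, pderiv_mul, pderiv_comm i j]
  ring

theorem integrable_polyMulExp_add_smul {A : ℝ} (hA : 0 < A) {x u : σ → ℝ}
    (hq : ∀ t : ℝ, eval (x + t • u) q = -A * t ^ 2) (p : MvPolynomial σ ℝ) :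
    Integrable fun t : ℝ => polyMulExp q p (x + t • u) := by
  simpa only [polyMulExp_apply, hq, eval_add_smul_eq_eval_aeval p x u] using
    integrable_polynomial_eval_mul_exp_neg_mul_sq hA _

variable [Fintype σ]

def dirTwistedPDeriv (u : σ → ℝ) : Module.End ℝ (MvPolynomial σ ℝ) :=
  ∑ i, u i • twistedPDeriv q i

theorem hasDerivAt_polyMulExp_add_smul (p : MvPolynomial σ ℝ) (x u : σ → ℝ) (t : ℝ) :
    HasDerivAt (fun s => polyMulExp q p (x + s • u))
      (polyMulExp q (dirTwistedPDeriv q u p) (x + t • u)) t := by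
  refine ((hasDerivAt_eval_add_smul p x u t).fun_mul
    (hasDerivAt_eval_add_smul q x u t).exp).congr_deriv ?_
  simp only [polyMulExp_apply, dirTwistedPDeriv, twistedPDeriv, LinearMap.sum_apply,
    LinearMap.smul_apply, LinearMap.add_apply, LinearMap.mulLeft_apply, Derivation.coeFn_coe,
    map_sum, smul_eval, eval_add, eval_mul, mul_sum, sum_mul]
  rw [← sum_add_distrib]
  exact sum_congr rfl fun i _ => by ring

theorem iterate_deriv_polyMulExp_add_smul (p : MvPolynomial σ ℝ) (x u : σ → ℝ) (n : ℕ) :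
    deriv^[n] (fun s : ℝ => polyMulExp q p (x + s • u)) =
      fun t => polyMulExp q ((dirTwistedPDeriv q u ^ n) p) (x + t • u) := by
  induction n with
  | zero => rfl
  | succ n ih =>
    rw [Function.iterate_succ_apply', ih, pow_succ', Module.End.mul_apply]
    funext t
    exact (hasDerivAt_polyMulExp_add_smul q _ x u t).deriv

theorem integral_Ioi_polyMulExp_dirTwistedPDeriv {A : ℝ} (hA : 0 < A) {x u : σ → ℝ}
    (hq : ∀ t : ℝ, eval (x + t • u) q = -A * t ^ 2) (p : MvPolynomial σ ℝ) :
    ∫ t in Ioi (0 : ℝ), polyMulExp q (dirTwistedPDeriv q u p) (x + t • u) =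
      -polyMulExp q p x := by
  have hderiv := hasDerivAt_polyMulExp_add_smul q p x u
  have hint := integrable_polyMulExp_add_smul q hA hq
  have hlim := tendsto_zero_of_hasDerivAt_of_integrableOn_Ioi (a := 0) (fun t _ => hderiv t)
    (hint _).integrableOn (hint p).integrableOn
  rw [integral_Ioi_of_hasDerivAt_of_tendsto' (fun t _ => hderiv t) (hint _).integrableOn hlim]
  simp

end MvPolynomial

open MvPolynomial

theorem dirTwistedPDeriv_vecCons (q : MvPolynomial (Fin 2) ℝ) (c d : ℝ) :
    dirTwistedPDeriv q ![c, d] = c • twistedPDeriv q 0 + d • twistedPDeriv q 1 := by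
  simp [dirTwistedPDeriv, Fin.sum_univ_two]

theorem pd1_iterate_apply (F : ℝ × ℝ → ℝ) (n : ℕ) (x y : ℝ) :
    pd1^[n] F (x, y) = deriv^[n] (fun t => F (t, y)) x := by
  induction n generalizing x with
  | zero => rfl
  | succ n ih =>
    rw [Function.iterate_succ_apply', Function.iterate_succ_apply']
    exact congrArg (deriv · x) (funext ih)

theorem pd2_iterate_apply (F : ℝ × ℝ → ℝ) (n : ℕ) (x y : ℝ) :
    pd2^[n] F (x, y) = deriv^[n] (fun t => F (x, t)) y := by
  induction n generalizing y with
  | zero => rfl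
  | succ n ih =>
    rw [Function.iterate_succ_apply', Function.iterate_succ_apply']
    exact congrArg (deriv · y) (funext ih)

theorem pd1_iterate_comp_neg_fst (F : ℝ × ℝ → ℝ) (n : ℕ) (x y : ℝ) :
    pd1^[n] (fun h => F (-h.1, h.2)) (x, y) = (-1) ^ n * pd1^[n] F (-x, y) := by
  rw [pd1_iterate_apply, pd1_iterate_apply, ← iteratedDeriv_eq_iterate,
    ← iteratedDeriv_eq_iterate, iteratedDeriv_comp_neg n (fun t => F (t, y)), smul_eq_mul]

theorem pd1_iterate_polyMulExp (q p : MvPolynomial (Fin 2) ℝ) (n : ℕ) :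
    pd1^[n] (fun h => polyMulExp q p ![h.1, h.2]) =
      fun h => polyMulExp q ((twistedPDeriv q 0 ^ n) p) ![h.1, h.2] := by
  funext ⟨x, y⟩
  have hline : (fun t => polyMulExp q p ![t, y]) =
      fun t => polyMulExp q p (![0, y] + t • ![1, 0]) := by
    funext t
    simp
  rw [pd1_iterate_apply, hline, iterate_deriv_polyMulExp_add_smul]
  simp [dirTwistedPDeriv_vecCons]

theorem pd2_iterate_polyMulExp (q p : MvPolynomial (Fin 2) ℝ) (n : ℕ) :
    pd2^[n] (fun h => polyMulExp q p ![h.1, h.2]) =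
      fun h => polyMulExp q ((twistedPDeriv q 1 ^ n) p) ![h.1, h.2] := by
  funext ⟨x, y⟩
  have hline : (fun t => polyMulExp q p ![x, t]) =
      fun t => polyMulExp q p (![x, 0] + t • ![0, 1]) := by
    funext t
    simp
  rw [pd2_iterate_apply, hline, iterate_deriv_polyMulExp_add_smul]
  simp [dirTwistedPDeriv_vecCons]

def twistedBinomialSum (q : MvPolynomial (Fin 2) ℝ) (a b : ℝ) (n : ℕ) :
    Module.End ℝ (MvPolynomial (Fin 2) ℝ) :=
  ∑ i ∈ range n, (n.choose (i + 1) * (a ^ (i + 1) + b ^ (i + 1)) : ℝ) •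
    (twistedPDeriv q 1 ^ i * twistedPDeriv q 0 ^ (n - 1 - i))

theorem polyMulExp_twistedBinomialSum_apply (q : MvPolynomial (Fin 2) ℝ) (a b : ℝ) (n : ℕ)
    (p : MvPolynomial (Fin 2) ℝ) (x : Fin 2 → ℝ) :
    polyMulExp q (twistedBinomialSum q a b n p) x =
      ∑ i ∈ range n, (n.choose (i + 1) * (a ^ (i + 1) + b ^ (i + 1)) : ℝ) *
        polyMulExp q ((twistedPDeriv q 1 ^ i) ((twistedPDeriv q 0 ^ (n - 1 - i)) p)) x := by
  simp [twistedBinomialSum, map_sum, Finset.sum_apply]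

theorem twistedPDeriv_one_mul_twistedBinomialSum (q : MvPolynomial (Fin 2) ℝ) (a b : ℝ) (n : ℕ) :
    twistedPDeriv q 1 * twistedBinomialSum q a b n =
      (dirTwistedPDeriv q ![1, a] ^ n - twistedPDeriv q 0 ^ n) +
        (dirTwistedPDeriv q ![1, b] ^ n - twistedPDeriv q 0 ^ n) := by
  have hc := commute_twistedPDeriv q 0 1
  rw [dirTwistedPDeriv_vecCons, dirTwistedPDeriv_vecCons, one_smul, hc.add_smul_pow_sub_pow,
    hc.add_smul_pow_sub_pow, ← mul_add, ← sum_add_distrib, twistedBinomialSum]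
  simp only [mul_add, add_smul]

theorem polyMulExp_twistedPDeriv_one_twistedBinomialSum {q : MvPolynomial (Fin 2) ℝ} {a b : ℝ}
    (hq : ∀ y s : ℝ, eval (![0, y] + s • ![1, b]) q = eval (![0, y] + (-s) • ![1, a]) q)
    {n : ℕ} (hn : Odd n) (y : ℝ) :
    polyMulExp q (twistedPDeriv q 1 (twistedBinomialSum q a b n 1)) ![0, y] =
      -2 * polyMulExp q ((twistedPDeriv q 0 ^ n) 1) ![0, y] := by
  have hline : ∀ c, polyMulExp q ((dirTwistedPDeriv q ![1, c] ^ n) 1) ![0, y] =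
      iteratedDeriv n (fun s : ℝ => polyMulExp q 1 (![0, y] + s • ![1, c])) 0 := by
    intro c
    rw [iteratedDeriv_eq_iterate, iterate_deriv_polyMulExp_add_smul]
    simp
  have hreflect : (fun s : ℝ => polyMulExp q 1 (![0, y] + s • ![1, b])) =
      fun s => polyMulExp q 1 (![0, y] + (-s) • ![1, a]) := by
    funext s
    simp only [polyMulExp_apply, hq, map_one]
  have hcancel : polyMulExp q ((dirTwistedPDeriv q ![1, a] ^ n) 1) ![0, y] +
      polyMulExp q ((dirTwistedPDeriv q ![1, b] ^ n) 1) ![0, y] = 0 := by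
    rw [hline, hline, hreflect, iteratedDeriv_comp_neg n
      (fun s => polyMulExp q 1 (![0, y] + s • ![1, a])), neg_zero, hn.neg_one_pow]
    simp
  rw [← Module.End.mul_apply, twistedPDeriv_one_mul_twistedBinomialSum]
  simp only [map_add, map_sub, LinearMap.add_apply, LinearMap.sub_apply, Pi.add_apply,
    Pi.sub_apply]
  linarith

def gaussQuadForm (A c : ℝ) : MvPolynomial (Fin 2) ℝ :=
  C (-A) * (X 1 ^ 2 - C c * X 0 * X 1 + X 0 ^ 2)

theorem eval_gaussQuadForm (A c x y : ℝ) :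
    eval ![x, y] (gaussQuadForm A c) = -A * (y ^ 2 - c * x * y + x ^ 2) := by
  simp [gaussQuadForm]

theorem polyMulExp_gaussQuadForm_one (A c x y : ℝ) :
    polyMulExp (gaussQuadForm A c) 1 ![x, y] = exp (-A * (y ^ 2 - c * x * y + x ^ 2)) := by
  rw [polyMulExp_apply, map_one, one_mul, eval_gaussQuadForm]

theorem eval_gaussQuadForm_reflect (A a b y s : ℝ) :
    eval (![0, y] + s • ![1, b]) (gaussQuadForm A (a + b)) =
      eval (![0, y] + (-s) • ![1, a]) (gaussQuadForm A (a + b)) := by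
  simp only [Matrix.smul_vec2, Matrix.vec2_add, smul_eq_mul, eval_gaussQuadForm]
  ring

theorem stmt_16 (k : ℕ) (A a b : ℝ) (hA : 0 < A) :
    (∑ i ∈ Finset.range (2 * k + 1),
      ((2 * k + 1).choose (i + 1) : ℝ) * (a ^ (i + 1) + b ^ (i + 1)) *
        (pd2^[i] (pd1^[2 * k - i]
          (fun h : ℝ × ℝ => Real.exp (-A * (h.2 ^ 2 - (a + b) * h.1 * h.2 + h.1 ^ 2)))) (0, 0)))
    + 2 * ∫ x₂ in Set.Ioi (0 : ℝ),
        (pd1^[2 * k + 1]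
          (fun x : ℝ × ℝ => Real.exp (-A * (x.2 ^ 2 + (a + b) * x.1 * x.2 + x.1 ^ 2)))) (0, x₂)
    = 0 := by
  set q := gaussQuadForm A (a + b)
  set N := twistedBinomialSum q a b (2 * k + 1) 1
  have hf : (fun h : ℝ × ℝ => exp (-A * (h.2 ^ 2 - (a + b) * h.1 * h.2 + h.1 ^ 2))) =
      fun h => polyMulExp q 1 ![h.1, h.2] :=
    funext fun h => (polyMulExp_gaussQuadForm_one A (a + b) h.1 h.2).symm
  have hg : (fun x : ℝ × ℝ => exp (-A * (x.2 ^ 2 + (a + b) * x.1 * x.2 + x.1 ^ 2))) =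
      fun x => polyMulExp q 1 ![-x.1, x.2] := by
    funext x
    rw [polyMulExp_gaussQuadForm_one]
    ring_nf
  have hintegrand (y : ℝ) : pd1^[2 * k + 1] (fun x => polyMulExp q 1 ![-x.1, x.2]) (0, y) =
      2⁻¹ * polyMulExp q (twistedPDeriv q 1 N) ![0, y] := by
    rw [pd1_iterate_comp_neg_fst (fun h => polyMulExp q 1 ![h.1, h.2]), pd1_iterate_polyMulExp,
      polyMulExp_twistedPDeriv_one_twistedBinomialSum (q := q) (eval_gaussQuadForm_reflect A a b)
        (odd_two_mul_add_one k), (odd_two_mul_add_one k).neg_one_pow, neg_zero]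
    ring
  have hFTC := integral_Ioi_polyMulExp_dirTwistedPDeriv q hA (x := ![0, 0]) (u := ![0, 1])
    (by simp [q, gaussQuadForm]) N
  simp only [dirTwistedPDeriv_vecCons, zero_smul, one_smul, zero_add, Matrix.smul_vec2,
    Matrix.vec2_add, smul_eq_mul, mul_zero, mul_one] at hFTC
  rw [hf, hg, integral_congr_ae (ae_of_all _ hintegrand), integral_const_mul, hFTC,
    polyMulExp_twistedBinomialSum_apply]
  simp [pd1_iterate_polyMulExp, pd2_iterate_polyMulExp]
end
end
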